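/- arXiv:2101.05887 — 4 statements merged into one kernel-verified Lean document; each statement's English description precedes it below -/
import Mathlib

section
/- Let (Ω, 𝓜, μ) be a measure space, let f : Ω → ℝ be integrable with f(x) ≠ 0 for μ-almost every x, and let h : Ω → ℝ be integrable. Then lim_{t → 0} ( ∫_Ω |f(x) + t·h(x)| dμ(x) − ∫_Ω |f(x)| dμ(x) ) / t = ∫_Ω sign(f(x))·h(x) dμ(x), where the limit is over nonzero reals t tending to 0. -/
open Filter Topology MeasureTheory

theorem stmt_5 {Ω : Type*} [MeasurableSpace Ω] (μ : Measure Ω) (f h : Ω → ℝ)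
    (hf : Integrable f μ) (hf0 : ∀ᵐ x ∂μ, f x ≠ 0) (hh : Integrable h μ) :
    Tendsto (fun t : ℝ =>
        ((∫ x, |f x + t * h x| ∂μ) - ∫ x, |f x| ∂μ) / t) (𝓝[≠] (0 : ℝ))
      (𝓝 (∫ x, Real.sign (f x) * h x ∂μ)) := by
  have key : Tendsto (fun t : ℝ => ∫ x, (|f x + t * h x| - |f x|) / t ∂μ)
      (𝓝[≠] (0 : ℝ)) (𝓝 (∫ x, Real.sign (f x) * h x ∂μ)) := by
    apply tendsto_integral_filter_of_dominated_convergence (fun x => |h x|)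
    · filter_upwards with t
      exact (((hf.add (hh.const_mul t)).abs.sub hf.abs).div_const t).aestronglyMeasurable
    · filter_upwards [self_mem_nhdsWithin] with t (ht : t ≠ 0)
      filter_upwards with x
      rw [norm_div, Real.norm_eq_abs, Real.norm_eq_abs, div_le_iff₀ (abs_pos.mpr ht)]
      calc |(|f x + t * h x| - |f x|)| ≤ |f x + t * h x - f x| :=
            abs_abs_sub_abs_le_abs_sub _ _
        _ = |h x| * |t| := by rw [add_sub_cancel_left, abs_mul, mul_comm]
    · exact hh.abs
    · filter_upwards [hf0] with x hx
      have hd : HasDerivAt (fun t : ℝ => |f x + t * h x|) (Real.sign (f x) * h x) 0 := by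
        have h1 : HasDerivAt (fun t : ℝ => f x + t * h x) (h x) 0 := by
          simpa using ((hasDerivAt_id (0:ℝ)).mul_const (h x)).const_add (f x)
        have habs : HasDerivAt (fun y : ℝ => |y|) (SignType.sign (f x) : ℝ)
            (f x + 0 * h x) := by simpa using hasDerivAt_abs hx
        have h2 := habs.comp 0 h1
        have hs : (SignType.sign (f x) : ℝ) = Real.sign (f x) := by
          rcases lt_or_gt_of_ne hx with hlt | hgt
          · simp [Real.sign_of_neg hlt, hlt]
          · simp [Real.sign_of_pos hgt, hgt]
        simpa [hs, Function.comp_def] using h2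
      have := hasDerivAt_iff_tendsto_slope.mp hd
      refine this.congr fun t => ?_
      simp [slope_def_field, div_eq_inv_mul, mul_comm]
  refine key.congr fun t => ?_
  have hint : Integrable (fun x => f x + t * h x) μ := hf.add (hh.const_mul t)
  rw [integral_div, integral_sub hint.abs hf.abs]
end

section
/- Let (Ω, 𝓜, μ) be a measure space and let f : Ω → ℝ be integrable with f(x) ≠ 0 for μ-almost every x. Then the map h ↦ ∫_Ω sign(f(x))·h(x) dμ(x) defines a bounded (continuous) linear functional on L¹(Ω, μ), and the L¹ norm φ is Gâteaux differentiable at (the class of) f with Gâteaux derivative ∂_G φ(f)(h) = ∫_Ω sign(f(x))·h(x) dμ(x) for every h ∈ L¹(Ω, μ). -/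
open Filter Topology MeasureTheory

lemma measurable_realSign : Measurable Real.sign := by
  have : Real.sign = fun r : ℝ => if r < 0 then (-1:ℝ) else if 0 < r then 1 else 0 := by
    funext r; rfl
  rw [this]
  exact Measurable.ite measurableSet_Iio measurable_const
    (Measurable.ite measurableSet_Ioi measurable_const measurable_const)

theorem stmt_6 {Ω : Type*} [MeasurableSpace Ω] (μ : Measure Ω) (f : Ω → ℝ)
    (hf : Integrable f μ) (hf0 : ∀ᵐ x ∂μ, f x ≠ 0) :
    ∃ u : Lp ℝ 1 μ →L[ℝ] ℝ, ∀ h : Lp ℝ 1 μ,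
      u h = (∫ x, Real.sign (f x) * h x ∂μ) ∧
      Tendsto (fun t : ℝ =>
          (‖(memLp_one_iff_integrable.mpr hf).toLp f + t • h‖ -
            ‖(memLp_one_iff_integrable.mpr hf).toLp f‖) / t)
        (𝓝[≠] (0 : ℝ)) (𝓝 (u h)) := by
  set g : Ω → ℝ := fun x => Real.sign (f x) with hg
  have habsm : ∀ {φ : Ω → ℝ}, AEStronglyMeasurable φ μ →
      AEStronglyMeasurable (fun x => |φ x|) μ := fun hφ => by
    simpa [Real.norm_eq_abs] using hφ.norm
  have hgm : AEStronglyMeasurable g μ :=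
    (measurable_realSign.comp_aemeasurable hf.aemeasurable).aestronglyMeasurable
  have hgbdd : ∀ x, ‖g x‖ ≤ 1 := fun x => by
    simp only [hg, Real.norm_eq_abs]
    rcases lt_trichotomy (f x) 0 with h' | h' | h'
    · simp [Real.sign_of_neg h']
    · simp [h', Real.sign_zero]
    · simp [Real.sign_of_pos h']
  have hint : ∀ h : Lp ℝ 1 μ, Integrable (fun x => g x * h x) μ := fun h =>
    (L1.integrable_coeFn h).bdd_mul (c := 1) hgm (Filter.Eventually.of_forall hgbdd)
  let L : Lp ℝ 1 μ →ₗ[ℝ] ℝ :=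
    { toFun := fun h => ∫ x, g x * h x ∂μ
      map_add' := fun h₁ h₂ => by
        have h1 : ∀ᵐ x ∂μ, g x * (↑(h₁ + h₂) : Ω → ℝ) x = g x * h₁ x + g x * h₂ x := by
          filter_upwards [Lp.coeFn_add h₁ h₂] with x hx
          rw [hx, Pi.add_apply, mul_add]
        show (∫ x, g x * (↑(h₁ + h₂) : Ω → ℝ) x ∂μ) = _
        rw [integral_congr_ae h1, integral_add (hint h₁) (hint h₂)]
      map_smul' := fun c h => by
        have h1 : ∀ᵐ x ∂μ, g x * (↑(c • h) : Ω → ℝ) x = c * (g x * h x) := by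
          filter_upwards [Lp.coeFn_smul c h] with x hx
          rw [hx, Pi.smul_apply, smul_eq_mul]; ring
        show (∫ x, g x * (↑(c • h) : Ω → ℝ) x ∂μ) = _
        rw [integral_congr_ae h1, integral_const_mul]
        rfl }
  have hLbound : ∀ h : Lp ℝ 1 μ, ‖L h‖ ≤ 1 * ‖h‖ := by
    intro h
    have h1 : ‖L h‖ ≤ ∫ x, ‖g x * h x‖ ∂μ := norm_integral_le_integral_norm _
    have h2 : ∫ x, ‖g x * h x‖ ∂μ ≤ ∫ x, ‖(h : Ω → ℝ) x‖ ∂μ := by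
      refine integral_mono_of_nonneg (Filter.Eventually.of_forall fun x => norm_nonneg _)
        (L1.integrable_coeFn h).norm (Filter.Eventually.of_forall fun x => ?_)
      simp only [norm_mul]
      calc ‖g x‖ * ‖(h : Ω → ℝ) x‖ ≤ 1 * ‖(h : Ω → ℝ) x‖ :=
            mul_le_mul_of_nonneg_right (hgbdd x) (norm_nonneg _)
        _ = ‖(h : Ω → ℝ) x‖ := one_mul _
    rw [one_mul, L1.norm_eq_integral_norm]
    exact h1.trans h2
  refine ⟨L.mkContinuous 1 hLbound, fun h => ⟨rfl, ?_⟩⟩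
  set F := (memLp_one_iff_integrable.mpr hf).toLp f with hF
  have hhint : Integrable (fun x => (h : Ω → ℝ) x) μ := L1.integrable_coeFn h
  set G : ℝ → Ω → ℝ := fun t x => (|f x + t * h x| - |f x|) / t with hG
  have hI1 : ∀ t : ℝ, Integrable (fun x => |f x + t * (h : Ω → ℝ) x|) μ := fun t =>
    (hf.add (hhint.const_mul t)).abs
  have key : ∀ t : ℝ, t ≠ 0 → (‖F + t • h‖ - ‖F‖) / t = ∫ x, G t x ∂μ := by
    intro t ht
    have hFh : ∀ᵐ x ∂μ, (↑(F + t • h) : Ω → ℝ) x = f x + t * h x := by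
      filter_upwards [Lp.coeFn_add F (t • h), Lp.coeFn_smul t h,
        (memLp_one_iff_integrable.mpr hf).coeFn_toLp] with x h1 h2 h3
      rw [h1, Pi.add_apply, h2, Pi.smul_apply, smul_eq_mul, hF, h3]
    have e1 : ‖F + t • h‖ = ∫ x, |f x + t * h x| ∂μ := by
      rw [L1.norm_eq_integral_norm]
      refine integral_congr_ae ?_
      filter_upwards [hFh] with x hx
      rw [Real.norm_eq_abs, hx]
    have e2 : ‖F‖ = ∫ x, |f x| ∂μ := by
      rw [L1.norm_eq_integral_norm]
      refine integral_congr_ae ?_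
      filter_upwards [(memLp_one_iff_integrable.mpr hf).coeFn_toLp] with x hx
      rw [Real.norm_eq_abs, hF, hx]
    have e3 : ∫ x, G t x ∂μ = (∫ x, (|f x + t * h x| - |f x|) ∂μ) / t := by
      simp only [hG]
      rw [integral_div]
    rw [e1, e2, e3, integral_sub (hI1 t) hf.abs]
  have hGmeas : ∀ᶠ t in 𝓝[≠] (0:ℝ), AEStronglyMeasurable (G t) μ := by
    refine Filter.Eventually.of_forall fun t => ?_
    have hm := ((habsm (hf.aestronglyMeasurable.add
      (hhint.aestronglyMeasurable.const_smul t))).sub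
      (habsm hf.aestronglyMeasurable)).mul (aestronglyMeasurable_const (b := t⁻¹))
    simp only [hG]
    refine hm.congr (Filter.Eventually.of_forall fun x => ?_)
    simp [Pi.sub_apply, Pi.add_apply, Pi.smul_apply, smul_eq_mul, div_eq_mul_inv]
  have hGbound : ∀ᶠ t in 𝓝[≠] (0:ℝ), ∀ᵐ x ∂μ, ‖G t x‖ ≤ |(h : Ω → ℝ) x| := by
    filter_upwards [self_mem_nhdsWithin] with t ht
    refine Filter.Eventually.of_forall fun x => ?_
    have ht' : t ≠ 0 := ht
    simp only [hG, Real.norm_eq_abs, abs_div]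
    rw [div_le_iff₀ (abs_pos.mpr ht')]
    calc |(|f x + t * h x| - |f x|)| ≤ |t * h x| := by
          have := abs_abs_sub_abs_le_abs_sub (f x + t * h x) (f x)
          simpa using this
      _ = |t| * |(h : Ω → ℝ) x| := abs_mul _ _
      _ = |(h : Ω → ℝ) x| * |t| := mul_comm _ _
  have hGlim : ∀ᵐ x ∂μ, Tendsto (fun t => G t x) (𝓝[≠] (0:ℝ)) (𝓝 (g x * h x)) := by
    filter_upwards [hf0] with x hx
    have hε : (0:ℝ) < |f x| / (|(h : Ω → ℝ) x| + 1) :=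
      div_pos (abs_pos.mpr hx) (by positivity)
    have hev : ∀ᶠ t in 𝓝[≠] (0:ℝ), G t x = g x * h x := by
      have h1 : ∀ᶠ t in 𝓝 (0:ℝ), |t| < |f x| / (|(h : Ω → ℝ) x| + 1) := by
        refine Metric.eventually_nhds_iff.mpr
          ⟨|f x| / (|(h : Ω → ℝ) x| + 1), hε, fun {y} hy => ?_⟩
        simpa [Real.dist_eq] using hy
      filter_upwards [eventually_nhdsWithin_of_eventually_nhds h1, self_mem_nhdsWithin]
        with t ht ht0
      have ht0' : t ≠ 0 := ht0
      have hlt : |t * (h : Ω → ℝ) x| < |f x| := by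
        rw [abs_mul]
        calc |t| * |(h : Ω → ℝ) x| ≤ |t| * (|(h : Ω → ℝ) x| + 1) := by
              apply mul_le_mul_of_nonneg_left (by linarith) (abs_nonneg _)
          _ < |f x| := by
              rw [← lt_div_iff₀ (by positivity)]; exact ht
      obtain ⟨hl, hr⟩ := abs_lt.mp hlt
      rcases hx.lt_or_gt with hneg | hpos
      · have h2 : f x + t * h x < 0 := by
          rw [abs_of_neg hneg] at hr; linarith
        simp only [hG, hg, abs_of_neg h2, abs_of_neg hneg, Real.sign_of_neg hneg]
        rw [div_eq_iff ht0']; ring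
      · have h2 : 0 < f x + t * h x := by
          rw [abs_of_pos hpos] at hl; linarith
        simp only [hG, hg, abs_of_pos h2, abs_of_pos hpos, Real.sign_of_pos hpos]
        rw [div_eq_iff ht0']; ring
    exact Tendsto.congr' (hev.mono fun t ht => ht.symm) tendsto_const_nhds
  have main : Tendsto (fun t => ∫ x, G t x ∂μ) (𝓝[≠] (0:ℝ)) (𝓝 (∫ x, g x * h x ∂μ)) :=
    tendsto_integral_filter_of_dominated_convergence _ hGmeas hGbound hhint.abs hGlim
  refine Tendsto.congr' ?_ main
  filter_upwards [self_mem_nhdsWithin] with t ht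
  exact (key t ht).symm
end

section
/- Let (Ω, 𝓜, μ) be a measure space satisfying condition (A1), and let f : Ω → ℝ be integrable such that the set {x ∈ Ω : f(x) = 0} has positive μ-measure. Then the L¹(Ω, μ) norm φ is not Gâteaux differentiable at (the class of) f: there exists h ∈ L¹(Ω, μ), h ≠ 0, such that the limit lim_{t → 0} (φ(f + t·h) − φ(f))/t does not exist. -/
open Filter Topology MeasureTheory Set

lemma norm_toLp_one' {Ω : Type*} [MeasurableSpace Ω] {μ : Measure Ω} {g : Ω → ℝ}
    (hg : Integrable g μ) :
    ‖(memLp_one_iff_integrable.mpr hg).toLp g‖ = ∫ x, ‖g x‖ ∂μ := by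
  rw [Lp.norm_toLp, eLpNorm_one_eq_lintegral_enorm, ← integral_norm_eq_lintegral_enorm hg.1]

theorem stmt_8 {Ω : Type*} [MeasurableSpace Ω] (μ : Measure Ω)
    (hA1 : ∀ I : Set Ω, MeasurableSet I → μ I = ⊤ →
      ∃ F : Set Ω, F ⊆ I ∧ MeasurableSet F ∧ 0 < μ F ∧ μ F < ⊤)
    (f : Ω → ℝ) (hf : Integrable f μ) (hf0 : 0 < μ {x | f x = 0}) :
    ∃ h : Lp ℝ 1 μ, h ≠ 0 ∧
      ¬ ∃ L : ℝ, Tendsto (fun t : ℝ =>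
          (‖(memLp_one_iff_integrable.mpr hf).toLp f + t • h‖ -
            ‖(memLp_one_iff_integrable.mpr hf).toLp f‖) / t)
        (𝓝[≠] (0 : ℝ)) (𝓝 L) := by
  classical
  -- measurable representative
  set f' := hf.1.mk f with hf'def
  have hfae : f =ᵐ[μ] f' := hf.1.ae_eq_mk
  have hf'm : Measurable f' := hf.1.measurable_mk
  have hZ : 0 < μ {x | f' x = 0} := by
    have hsub : {x | f x = 0} ⊆ {x | f' x = 0} ∪ {x | f x ≠ f' x} := by
      intro x hx
      by_cases hxx : f x = f' x
      · exact Or.inl (by simpa [Set.mem_setOf_eq, ← hxx] using hx)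
      · exact Or.inr hxx
    have hnull : μ {x | f x ≠ f' x} = 0 := hfae
    by_contra hcon
    push_neg at hcon
    have : μ {x | f x = 0} = 0 := by
      refine le_antisymm ?_ zero_le
      calc μ {x | f x = 0} ≤ μ ({x | f' x = 0} ∪ {x | f x ≠ f' x}) := measure_mono hsub
        _ ≤ μ {x | f' x = 0} + μ {x | f x ≠ f' x} := measure_union_le _ _
        _ = 0 := by rw [hnull, le_antisymm hcon zero_le]; simp
    exact absurd this hf0.ne'
  have hZm : MeasurableSet {x | f' x = 0} := hf'm (measurableSet_singleton 0)
  -- get E ⊆ {f' = 0}, measurable, 0 < μ E < ⊤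
  obtain ⟨E, hEsub, hEm, hE0, hEfin⟩ :
      ∃ E : Set Ω, E ⊆ {x | f' x = 0} ∧ MeasurableSet E ∧ 0 < μ E ∧ μ E < ⊤ := by
    by_cases htop : μ {x | f' x = 0} = ⊤
    · exact hA1 _ hZm htop
    · exact ⟨_, Set.Subset.rfl, hZm, hZ, lt_top_iff_ne_top.mpr htop⟩
  set c : ℝ := (μ E).toReal with hc
  have hcpos : 0 < c := ENNReal.toReal_pos hE0.ne' hEfin.ne
  have hindmem : MemLp (E.indicator fun _ => (1 : ℝ)) 1 μ :=
    memLp_indicator_const 1 hEm 1 (Or.inr hEfin.ne)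
  have hindint : Integrable (E.indicator fun _ => (1 : ℝ)) μ :=
    memLp_one_iff_integrable.mp hindmem
  refine ⟨hindmem.toLp _, ?_, ?_⟩
  · -- h ≠ 0
    intro h0
    have : ‖hindmem.toLp _‖ = ∫ x, ‖E.indicator (fun _ => (1:ℝ)) x‖ ∂μ :=
      norm_toLp_one' hindint
    rw [h0, norm_zero] at this
    have : (0:ℝ) = c := by
      rw [this]
      simp only [Real.norm_eq_abs]
      have : ∀ x, |E.indicator (fun _ => (1:ℝ)) x| = E.indicator (fun _ => (1:ℝ)) x := by
        intro x; by_cases hx : x ∈ E <;> simp [Set.indicator_apply, hx]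
      simp_rw [this]
      rw [integral_indicator_const _ hEm]
      simp [hc, Measure.real]
    exact hcpos.ne' this.symm
  · -- no limit
    rintro ⟨L, hL⟩
    -- key norm identity
    have key : ∀ t : ℝ,
        ‖(memLp_one_iff_integrable.mpr hf).toLp f + t • hindmem.toLp _‖
          = ∫ x, ‖f x‖ ∂μ + |t| * c := by
      intro t
      have hsm : MemLp (t • E.indicator fun _ => (1:ℝ)) 1 μ := hindmem.const_smul t
      have h1 : t • hindmem.toLp _ = hsm.toLp _ := (MemLp.toLp_const_smul t hindmem).symm
      have hmemadd : MemLp (f + t • E.indicator fun _ => (1:ℝ)) 1 μ :=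
        (memLp_one_iff_integrable.mpr hf).add hsm
      have h2 : (memLp_one_iff_integrable.mpr hf).toLp f + hsm.toLp _ = hmemadd.toLp _ :=
        (MemLp.toLp_add _ hsm).symm
      rw [h1, h2, norm_toLp_one' (memLp_one_iff_integrable.mp hmemadd)]
      have hae : (fun x => ‖(f + t • E.indicator fun _ => (1:ℝ)) x‖)
          =ᵐ[μ] fun x => ‖f x‖ + E.indicator (fun _ => |t|) x := by
        filter_upwards [hfae] with x hx
        by_cases hxE : x ∈ E
        · have : f x = 0 := by rw [hx]; exact hEsub hxE
          simp [this, hxE, Set.indicator_apply, Real.norm_eq_abs]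
        · simp [hxE, Set.indicator_apply]
      rw [integral_congr_ae hae, integral_add hf.norm]
      · congr 1
        rw [integral_indicator_const _ hEm]
        simp [hc, mul_comm, Measure.real]
      · exact memLp_one_iff_integrable.mp
          (memLp_indicator_const 1 hEm (|t|) (Or.inr hEfin.ne))
    have keyf : ∀ t : ℝ, t ≠ 0 →
        (‖(memLp_one_iff_integrable.mpr hf).toLp f + t • hindmem.toLp _‖ -
          ‖(memLp_one_iff_integrable.mpr hf).toLp f‖) / t = |t| / t * c := by
      intro t ht
      rw [key t, norm_toLp_one' hf]
      ring
    -- limits from right and left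
    have hright : Tendsto (fun t : ℝ =>
        (‖(memLp_one_iff_integrable.mpr hf).toLp f + t • hindmem.toLp _‖ -
          ‖(memLp_one_iff_integrable.mpr hf).toLp f‖) / t) (𝓝[>] (0:ℝ)) (𝓝 L) :=
      hL.mono_left (nhdsWithin_mono _ (fun x hx => ne_of_gt hx))
    have hleft : Tendsto (fun t : ℝ =>
        (‖(memLp_one_iff_integrable.mpr hf).toLp f + t • hindmem.toLp _‖ -
          ‖(memLp_one_iff_integrable.mpr hf).toLp f‖) / t) (𝓝[<] (0:ℝ)) (𝓝 L) :=
      hL.mono_left (nhdsWithin_mono _ (fun x hx => ne_of_lt hx))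
    have hc1 : L = c := by
      refine tendsto_nhds_unique hright ?_
      have : ∀ t ∈ Set.Ioi (0:ℝ),
          (‖(memLp_one_iff_integrable.mpr hf).toLp f + t • hindmem.toLp _‖ -
            ‖(memLp_one_iff_integrable.mpr hf).toLp f‖) / t = c := by
        intro t ht
        rw [keyf t (ne_of_gt ht), abs_of_pos ht, div_self (ne_of_gt ht), one_mul]
      exact Tendsto.congr' (eventually_nhdsWithin_of_forall fun t ht => (this t ht).symm)
        tendsto_const_nhds
    have hc2 : L = -c := by
      refine tendsto_nhds_unique hleft ?_
      have : ∀ t ∈ Set.Iio (0:ℝ),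
          (‖(memLp_one_iff_integrable.mpr hf).toLp f + t • hindmem.toLp _‖ -
            ‖(memLp_one_iff_integrable.mpr hf).toLp f‖) / t = -c := by
        intro t ht
        rw [keyf t (ne_of_lt ht), abs_of_neg ht, neg_div, div_self (ne_of_lt ht)]
        ring
      exact Tendsto.congr' (eventually_nhdsWithin_of_forall fun t ht => (this t ht).symm)
        tendsto_const_nhds
    rw [hc1] at hc2
    linarith
end

section
/- Let x ∈ ℓ¹(ℕ) be a real summable sequence with x_n ≠ 0 for all n ∈ ℕ. Then the ℓ¹(ℕ) norm φ(x) = Σ_n |x_n| is Gâteaux differentiable at x, and for every h ∈ ℓ¹(ℕ), ∂_G φ(x)(h) = Σ_n sign(x_n)·h_n. -/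
open Filter Topology

theorem stmt_10 (x : lp (fun _ : ℕ => ℝ) 1) (hx : ∀ n : ℕ, x n ≠ 0) :
    ∃ u : lp (fun _ : ℕ => ℝ) 1 →L[ℝ] ℝ, ∀ h : lp (fun _ : ℕ => ℝ) 1,
      u h = (∑' n : ℕ, Real.sign (x n) * h n) ∧
      Tendsto (fun t : ℝ => (‖x + t • h‖ - ‖x‖) / t) (𝓝[≠] (0 : ℝ)) (𝓝 (u h)) := by
  -- summability of coordinates
  have habs : ∀ (f : lp (fun _ : ℕ => ℝ) 1), Summable fun n => |f n| := by
    intro f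
    have := (lp.memℓp f).summable (p := 1) (by norm_num)
    simpa [Real.norm_eq_abs] using this
  have hnorm : ∀ (f : lp (fun _ : ℕ => ℝ) 1), ‖f‖ = ∑' n, |f n| := by
    intro f
    rw [lp.norm_eq_tsum_rpow (by norm_num) f]
    simp [Real.norm_eq_abs]
  have hsign : ∀ r : ℝ, |Real.sign r| ≤ 1 := by
    intro r; rcases Real.sign_apply_eq r with h | h | h <;> simp [h]
  have hsummable : ∀ (h : lp (fun _ : ℕ => ℝ) 1),
      Summable (fun n => Real.sign (x n) * h n) := by
    intro h
    apply Summable.of_norm_bounded (habs h)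
    intro n
    rw [norm_mul]
    calc ‖Real.sign (x n)‖ * ‖h n‖ ≤ 1 * ‖h n‖ := by
          apply mul_le_mul_of_nonneg_right (hsign _) (norm_nonneg _)
      _ = |h n| := by simp [Real.norm_eq_abs]
  -- the linear functional
  let L : lp (fun _ : ℕ => ℝ) 1 →ₗ[ℝ] ℝ :=
    { toFun := fun h => ∑' n, Real.sign (x n) * h n
      map_add' := by
        intro a b
        dsimp only
        have : (fun n => Real.sign (x n) * (a + b) n)
            = fun n => Real.sign (x n) * a n + Real.sign (x n) * b n := by
          funext n; simp [mul_add]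
        rw [this, Summable.tsum_add (hsummable a) (hsummable b)]
      map_smul' := by
        intro c a
        dsimp only
        have : (fun n => Real.sign (x n) * (c • a) n)
            = fun n => c * (Real.sign (x n) * a n) := by
          funext n; simp; ring
        rw [this, tsum_mul_left]
        simp }
  have hLbound : ∀ h, ‖L h‖ ≤ 1 * ‖h‖ := by
    intro h
    rw [one_mul, hnorm h]
    calc ‖L h‖ = ‖∑' n, Real.sign (x n) * h n‖ := rfl
      _ ≤ ∑' n, ‖Real.sign (x n) * h n‖ := norm_tsum_le_tsum_norm
            ((habs h).of_nonneg_of_le (fun n => norm_nonneg _)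
              (fun n => by
                rw [norm_mul]
                calc ‖Real.sign (x n)‖ * ‖h n‖ ≤ 1 * ‖h n‖ :=
                      mul_le_mul_of_nonneg_right (hsign _) (norm_nonneg _)
                  _ = |h n| := by simp [Real.norm_eq_abs]))
      _ ≤ ∑' n, |h n| := by
          apply Summable.tsum_le_tsum _ _ (habs h)
          · intro n
            rw [norm_mul]
            calc ‖Real.sign (x n)‖ * ‖h n‖ ≤ 1 * ‖h n‖ :=
                  mul_le_mul_of_nonneg_right (hsign _) (norm_nonneg _)
              _ = |h n| := by simp [Real.norm_eq_abs]
          · exact (habs h).of_nonneg_of_le (fun n => norm_nonneg _)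
              (fun n => by
                rw [norm_mul]
                calc ‖Real.sign (x n)‖ * ‖h n‖ ≤ 1 * ‖h n‖ :=
                      mul_le_mul_of_nonneg_right (hsign _) (norm_nonneg _)
                  _ = |h n| := by simp [Real.norm_eq_abs])
  refine ⟨L.mkContinuous 1 hLbound, fun h => ⟨rfl, ?_⟩⟩
  -- pointwise difference quotient
  set F : ℝ → ℕ → ℝ := fun t n => (|x n + t * h n| - |x n|) / t with hF
  -- key algebraic identity
  have key : ∀ n : ℕ, ∀ t : ℝ, |t| * |h n| < |x n| →
      |x n + t * h n| - |x n| = t * (Real.sign (x n) * h n) := by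
    intro n t ht
    have habs' : |t * h n| < |x n| := by rwa [abs_mul]
    rcases lt_trichotomy (x n) 0 with hneg | hzero | hpos
    · have h1 : x n + t * h n < 0 := by
        have := neg_abs_le (t * h n)
        have hxn : |x n| = -x n := abs_of_neg hneg
        nlinarith [habs', le_abs_self (t * (h : ℕ → ℝ) n), neg_abs_le (t * (h : ℕ → ℝ) n)]
      rw [abs_of_neg h1, abs_of_neg hneg, Real.sign_of_neg hneg]; ring
    · exact absurd hzero (hx n)
    · have h1 : 0 < x n + t * h n := by
        have := neg_abs_le (t * h n)
        have hxn : |x n| = x n := abs_of_pos hpos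
        nlinarith [habs', le_abs_self (t * (h : ℕ → ℝ) n), neg_abs_le (t * (h : ℕ → ℝ) n)]
      rw [abs_of_pos h1, abs_of_pos hpos, Real.sign_of_pos hpos]; ring
  -- pointwise convergence
  have hpt : ∀ n : ℕ, Tendsto (fun t => F t n) (𝓝[≠] (0:ℝ))
      (𝓝 (Real.sign (x n) * h n)) := by
    intro n
    apply Tendsto.congr' _ tendsto_const_nhds
    have hx' : (0:ℝ) < |x n| := abs_pos.2 (hx n)
    have hsmall : ∀ᶠ t in 𝓝 (0:ℝ), |t| * |h n| < |x n| := by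
      have hcont : Tendsto (fun t : ℝ => |t| * |h n|) (𝓝 0) (𝓝 (|(0:ℝ)| * |h n|)) :=
        ((continuous_abs.mul continuous_const).tendsto 0)
      simp only [abs_zero, zero_mul] at hcont
      exact hcont.eventually_lt_const hx'
    filter_upwards [nhdsWithin_le_nhds hsmall, self_mem_nhdsWithin] with t ht ht0
    rw [hF]
    simp only
    rw [key n t ht]
    exact (mul_div_cancel_left₀ _ ht0).symm
  -- uniform bound
  have hbd : ∀ᶠ t in 𝓝[≠] (0:ℝ), ∀ n : ℕ, ‖F t n‖ ≤ |h n| := by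
    filter_upwards [self_mem_nhdsWithin] with t ht0 n
    rw [hF]
    simp only [Real.norm_eq_abs, abs_div]
    rw [div_le_iff₀ (abs_pos.2 ht0)]
    calc |(|x n + t * h n| - |x n|)| ≤ |(x n + t * h n) - x n| :=
          abs_abs_sub_abs_le_abs_sub _ _
      _ = |t * h n| := by ring_nf
      _ = |h n| * |t| := by rw [abs_mul]; ring
  have main : Tendsto (fun t => ∑' n, F t n) (𝓝[≠] (0:ℝ))
      (𝓝 (∑' n, Real.sign (x n) * h n)) :=
    tendsto_tsum_of_dominated_convergence (habs h) hpt hbd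
  -- identify the difference quotient of norms with the tsum
  have hL : (L.mkContinuous 1 hLbound) h = ∑' n, Real.sign (x n) * h n := rfl
  rw [hL]
  apply main.congr'
  filter_upwards [self_mem_nhdsWithin] with t ht0
  have hsum1 : Summable fun n => |x n + t * h n| := by
    have := habs (x + t • h)
    apply this.congr
    intro n
    simp
    rfl
  have hsum2 : Summable fun n => |x n| := habs x
  have h1 : ‖x + t • h‖ = ∑' n, |x n + t * h n| := by
    rw [hnorm (x + t • h)]
    apply tsum_congr
    intro n
    simp
    rfl
  rw [h1, hnorm x, ← Summable.tsum_sub hsum1 hsum2, ← tsum_div_const]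
end
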